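/- arXiv:1905.11526 — 11 statements merged into one kernel-verified Lean document; each statement's English description precedes it below -/
import Mathlib

section
/- The key poset relation ⪯ on weak compositions of length n is a partial order (reflexive, antisymmetric, transitive). -/
/-- The key poset order on weak compositions of length `n` (functions `Fin n → ℕ`):
`a ⪯ b` iff `a i ≤ b i` for all `i`, and for all `i < j`, if `b j > a j` and
`a i > a j` then `b i > b j`. -/
def KeyLE {n : ℕ} (a b : Fin n → ℕ) : Prop :=
  (∀ i, a i ≤ b i) ∧ ∀ i j : Fin n, i < j → a j < b j → a j < a i → b j < b i

/-- Strict key order. -/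
def KeyLT {n : ℕ} (a b : Fin n → ℕ) : Prop := KeyLE a b ∧ a ≠ b

/-- Cover relation in the key poset. -/
def KeyCovers {n : ℕ} (a b : Fin n → ℕ) : Prop :=
  KeyLT a b ∧ ¬ ∃ c : Fin n → ℕ, KeyLT a c ∧ KeyLT c b

/-- The rank of a weak composition: the sum of its parts. -/
def rk {n : ℕ} (a : Fin n → ℕ) : ℕ := ∑ i, a i

namespace KeyLE

variable {n : ℕ} {a b c : Fin n → ℕ}

theorem refl (a : Fin n → ℕ) : KeyLE a a :=
  ⟨fun _ => le_rfl, fun _ _ _ _ h => h⟩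

theorem antisymm (hab : KeyLE a b) (hba : KeyLE b a) : a = b :=
  funext fun i => le_antisymm (hab.1 i) (hba.1 i)

/-- Split on whether `a j < b j`: if so, `b j < b i` by `a ⪯ b`, and either `c j = b j` or `b ⪯ c`
gives `c j < c i`; if `a j = b j`, then `b j < a i ≤ b i` and `b ⪯ c` applies directly. -/
theorem trans (hab : KeyLE a b) (hbc : KeyLE b c) : KeyLE a c := by
  refine ⟨fun i => (hab.1 i).trans (hbc.1 i), fun i j hij hac hai => ?_⟩
  rcases (hab.1 j).lt_or_eq with hab_j | hab_j
  · have hb : b j < b i := hab.2 i j hij hab_j hai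
    rcases (hbc.1 j).lt_or_eq with hbc_j | hbc_j
    · exact hbc.2 i j hij hbc_j hb
    · exact hbc_j ▸ hb.trans_le (hbc.1 i)
  · rw [hab_j] at hac hai
    exact hbc.2 i j hij hac (hai.trans_le (hab.1 i))

end KeyLE

/-- The key poset relation is a partial order: reflexive, antisymmetric,
and transitive. -/
theorem keyLE_partialOrder {n : ℕ} :
    (∀ a : Fin n → ℕ, KeyLE a a) ∧
    (∀ a b : Fin n → ℕ, KeyLE a b → KeyLE b a → a = b) ∧
    (∀ a b c : Fin n → ℕ, KeyLE a b → KeyLE b c → KeyLE a c) :=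
  ⟨KeyLE.refl, fun _ _ => KeyLE.antisymm, fun _ _ _ => KeyLE.trans⟩
end

section
/- If a ⪯ b in the key poset and rk(b) = rk(a) + 1, then b is obtained from a by incrementing a single part a_j by 1, where for every i < j we have a_i ≠ a_j + 1. -/
/-! The rank condition forces `b` to differ from `a` in a single part `j`, raised by one.
If some earlier part had `a i = a j + 1 > a j`, the key condition would give
`b j < b i = a i = a j + 1 = b j`. -/

theorem Fintype.exists_eq_add_one_of_le_of_sum_eq_add_one {ι : Type*} [Fintype ι]
    {f g : ι → ℕ} (hle : ∀ i, f i ≤ g i) (hsum : ∑ i, g i = ∑ i, f i + 1) :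
    ∃ j, g j = f j + 1 ∧ ∀ i, i ≠ j → g i = f i := by
  classical
  have hd : ∑ i, (g i - f i) = 1 := by
    rw [Finset.sum_tsub_distrib _ fun i _ => hle i]
    omega
  obtain ⟨j, hj⟩ : ∃ j, g j - f j ≠ 0 := by
    by_contra! h
    simp [h] at hd
  have hdj : g j - f j ≤ 1 :=
    hd ▸ Finset.single_le_sum (fun i _ => Nat.zero_le (g i - f i)) (Finset.mem_univ j)
  refine ⟨j, by have := hle j; omega, fun i hij => ?_⟩
  have hpair : (g i - f i) + (g j - f j) ≤ 1 :=
    hd ▸ (Finset.sum_pair (f := fun k => g k - f k) hij).symm.trans_le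
      (Finset.sum_le_sum_of_subset (Finset.subset_univ _))
  have := hle i
  omega

theorem KeyLE.ne_add_one_of_lt {n : ℕ} {a b : Fin n → ℕ} (hab : KeyLE a b) {i j : Fin n}
    (hij : i < j) (hbj : b j = a j + 1) (hbi : b i = a i) : a i ≠ a j + 1 := by
  intro hai
  have := hab.2 i j hij (by omega) (by omega)
  omega

/-- If a ⪯ b and rk b = rk a + 1, then b is obtained from a by incrementing a
single part a_j by 1, where a_i ≠ a_j + 1 for all i < j. -/
theorem keyLE_rank_succ {n : ℕ} (a b : Fin n → ℕ)
    (hab : KeyLE a b) (hrk : rk b = rk a + 1) :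
    ∃ j : Fin n, b j = a j + 1 ∧ (∀ i, i ≠ j → b i = a i) ∧
      ∀ i, i < j → a i ≠ a j + 1 := by
  obtain ⟨j, hbj, hrest⟩ := Fintype.exists_eq_add_one_of_le_of_sum_eq_add_one hab.1 hrk
  exact ⟨j, hbj, hrest, fun i hij => hab.ne_add_one_of_lt hij hbj (hrest i hij.ne)⟩
end

section
/- Let a be a weak composition of length n and j an index such that for every i < j, either a_i ≤ a_j or a_i > a_j + 1. Define b by b_i = a_i for i ≠ j and b_j = a_j + 1. Then a ⪯ b in the key poset. -/
/-- Incrementing an entry a_j by 1, when every earlier entry a_i satisfies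
a_i ≤ a_j or a_i > a_j + 1, yields a weak composition above a in the key poset. -/
theorem keyLE_update_succ {n : ℕ} (a : Fin n → ℕ) (j : Fin n)
    (h : ∀ i, i < j → a i ≤ a j ∨ a j + 1 < a i) :
    KeyLE a (Function.update a j (a j + 1)) := by
  constructor
  · intro i
    rcases eq_or_ne i j with rfl | hij
    · simp
    · simp [Function.update_of_ne hij]
  · intro i k hik hk hai
    rcases eq_or_ne j k with rfl | hkj
    · have hij : i ≠ j := ne_of_lt hik
      rw [Function.update_of_ne hij, Function.update_self]
      rcases h i hik with h1 | h1
      · omega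
      · exact h1
    · rw [Function.update_of_ne (Ne.symm hkj)] at hk
      omega
end

section
/- If a ≺ c in the key poset with rk(c) > rk(a) + 1, then there exists a weak composition b with a ≺ b ≺ c (strict comparabilities) and rk(b) = rk(c) - 1. Consequently, the key poset is ranked by rk: every cover relation increases rank by exactly 1. -/
/-- If a ≺ c with rk c > rk a + 1 then there is b with a ≺ b ≺ c and
rk b = rk c − 1; consequently the key poset is ranked: covers increase rank by
exactly one. -/
theorem keyPoset_ranked {n : ℕ} :
    (∀ a c : Fin n → ℕ, KeyLT a c → rk a + 1 < rk c →
      ∃ b : Fin n → ℕ, KeyLT a b ∧ KeyLT b c ∧ rk b = rk c - 1) ∧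
    (∀ a b : Fin n → ℕ, KeyCovers a b → rk b = rk a + 1) := by
  have main : ∀ a c : Fin n → ℕ, KeyLT a c → rk a + 1 < rk c →
      ∃ b : Fin n → ℕ, KeyLT a b ∧ KeyLT b c ∧ rk b = rk c - 1 := by
    intro a c hac hrk
    obtain ⟨⟨hle, hkey⟩, hne⟩ := hac
    have hS : ∃ i, a i < c i := by
      by_contra h
      push_neg at h
      exact hne (funext fun i => le_antisymm (hle i) (h i))
    set T : Finset (Fin n) := Finset.univ.filter (fun i => a i < c i) with hT
    have hmemT : ∀ i, i ∈ T ↔ a i < c i := by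
      intro i; simp [hT]
    obtain ⟨i0, hi0⟩ := hS
    have hTne : T.Nonempty := ⟨i0, (hmemT i0).2 hi0⟩
    have hTcne : (T.image c).Nonempty := hTne.image c
    set m := (T.image c).min' hTcne with hm
    obtain ⟨k0, hk0T, hk0⟩ := Finset.mem_image.1 ((T.image c).min'_mem hTcne)
    have hmin : ∀ i, a i < c i → m ≤ c i := by
      intro i hi
      exact Finset.min'_le _ _ (Finset.mem_image_of_mem c ((hmemT i).2 hi))
    set T2 : Finset (Fin n) := T.filter (fun i => c i = m) with hT2
    have hT2ne : T2.Nonempty := ⟨k0, Finset.mem_filter.2 ⟨hk0T, hk0⟩⟩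
    set k := T2.min' hT2ne with hk
    have hkmem : k ∈ T2 := T2.min'_mem hT2ne
    rw [hT2, Finset.mem_filter] at hkmem
    have hak : a k < c k := (hmemT k).1 hkmem.1
    have hck : c k = m := hkmem.2
    have hkle : ∀ i, a i < c i → c i = m → k ≤ i := by
      intro i hi hci
      have hiT2 : i ∈ T2 := by
        rw [hT2, Finset.mem_filter]
        exact ⟨(hmemT i).2 hi, hci⟩
      exact Finset.min'_le _ _ hiT2
    set b := Function.update c k (c k - 1) with hb
    have hbk : b k = c k - 1 := Function.update_self ..
    have hbne : ∀ i, i ≠ k → b i = c i := fun i h => Function.update_of_ne h _ _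
    have hrkb : rk b + 1 = rk c := by
      have h1 : rk b = (c k - 1) + ∑ i ∈ Finset.univ \ {k}, c i := by
        rw [rk, hb, Finset.sum_update_of_mem (Finset.mem_univ k)]
      have h2 : rk c = c k + ∑ i ∈ Finset.univ \ {k}, c i := by
        rw [rk, ← Finset.add_sum_erase _ _ (Finset.mem_univ k), Finset.erase_eq]
      omega
    refine ⟨b, ⟨⟨?_, ?_⟩, ?_⟩, ⟨⟨?_, ?_⟩, ?_⟩, by omega⟩
    · -- a ≤ b pointwise
      intro i
      rcases eq_or_ne i k with rfl | h
      · rw [hbk]; omega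
      · rw [hbne i h]; exact hle i
    · -- key condition for a, b
      intro i j hij haj hai
      rcases eq_or_ne j k with rfl | hjk
      · have hik : i ≠ k := ne_of_lt hij
        rw [hbk] at haj ⊢
        rw [hbne i hik]
        have h1 : c k < c i := hkey i k hij (by omega) hai
        omega
      · rw [hbne j hjk] at haj ⊢
        rcases eq_or_ne i k with rfl | hik
        · have h1 : c j < c k := hkey k j hij haj hai
          have h2 : m ≤ c j := hmin j haj
          omega
        · rw [hbne i hik]
          exact hkey i j hij haj hai
    · -- a ≠ b
      intro h
      rw [h] at hrk
      omega
    · -- b ≤ c pointwise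
      intro i
      rcases eq_or_ne i k with rfl | h
      · rw [hbk]; omega
      · rw [hbne i h]
    · -- key condition for b, c
      intro i j hij hbj hbi
      rcases eq_or_ne j k with rfl | hjk
      · have hik : i ≠ k := ne_of_lt hij
        rw [hbne i hik] at hbi
        rw [hbk] at hbi
        by_contra hcon
        push_neg at hcon
        have hik2 : c i = c k := le_antisymm hcon (by omega)
        rcases lt_or_eq_of_le (hle i) with hilt | hieq
        · have h4 := hkle i hilt (by omega)
          exact absurd hij (not_lt.2 h4)
        · have h3 : a k < a i := by omega
          have h5 : c k < c i := hkey i k hij hak h3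
          omega
      · rw [hbne j hjk] at hbj
        omega
    · -- b ≠ c
      intro h
      have h1 := congrFun h k
      rw [hbk] at h1
      omega
  refine ⟨main, ?_⟩
  intro a b hab
  obtain ⟨habLT, hnc⟩ := hab
  have hle := habLT.1.1
  have hne := habLT.2
  have h1 : rk a < rk b := by
    have hex : ∃ i, a i < b i := by
      by_contra h; push_neg at h
      exact hne (funext fun i => le_antisymm (hle i) (h i))
    obtain ⟨i, hi⟩ := hex
    exact Finset.sum_lt_sum (fun j _ => hle j) ⟨i, Finset.mem_univ i, hi⟩
  by_contra h2
  have h3 : rk a + 1 < rk b := by omega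
  obtain ⟨c, hc1, hc2, _⟩ := main a b habLT h3
  exact hnc ⟨c, hc1, hc2⟩
end

section
/- In the key poset on weak compositions of length n, a ⪯ b is a cover relation (i.e., a ≺ b and no c satisfies a ≺ c ≺ b) if and only if b is obtained from a by incrementing a single entry a_j by 1 where for all i < j, a_i ≠ a_j + 1. -/
/-- Characterization of cover relations in the key poset: b covers a iff b is
obtained from a by incrementing a single entry a_j by 1 where a_i ≠ a_j + 1
for all i < j. -/
theorem keyCovers_iff {n : ℕ} (a b : Fin n → ℕ) :
    KeyCovers a b ↔
      ∃ j : Fin n, b j = a j + 1 ∧ (∀ i, i ≠ j → b i = a i) ∧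
        ∀ i, i < j → a i ≠ a j + 1 := by
  constructor
  · rintro ⟨⟨⟨hle, hkey⟩, hne⟩, hnc⟩
    -- the set of indices where a and b differ
    set S : Finset (Fin n) := Finset.univ.filter (fun i => a i < b i) with hSdef
    have hmemS : ∀ i, i ∈ S ↔ a i < b i := by intro i; simp [hSdef]
    have hSne : S.Nonempty := by
      by_contra h
      apply hne
      funext i
      have : i ∉ S := fun hi => h ⟨i, hi⟩
      rw [hmemS] at this
      exact le_antisymm (hle i) (not_lt.mp this)
    -- choose j1 ∈ S maximizing a
    obtain ⟨j1, hj1S, hj1max⟩ := S.exists_max_image a hSne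
    set T : Finset (Fin n) := S.filter (fun i => a i = a j1) with hTdef
    have hmemT : ∀ i, i ∈ T ↔ i ∈ S ∧ a i = a j1 := by intro i; simp [hTdef]
    have hTne : T.Nonempty := ⟨j1, (hmemT j1).mpr ⟨hj1S, rfl⟩⟩
    -- among those, maximize b
    obtain ⟨j2, hj2T, hj2max⟩ := T.exists_max_image b hTne
    set U : Finset (Fin n) := T.filter (fun i => b i = b j2) with hUdef
    have hmemU : ∀ i, i ∈ U ↔ i ∈ T ∧ b i = b j2 := by intro i; simp [hUdef]
    have hUne : U.Nonempty := ⟨j2, (hmemU j2).mpr ⟨hj2T, rfl⟩⟩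
    -- among those, maximize the index
    obtain ⟨j, hjU, hjmax⟩ := U.exists_max_image id hUne
    obtain ⟨hjT, hjb⟩ := (hmemU j).mp hjU
    obtain ⟨hjS, hja⟩ := (hmemT j).mp hjT
    have hjab : a j < b j := (hmemS j).mp hjS
    -- key property (A): no i < j with a i = a j + 1
    have hA : ∀ i, i < j → a i ≠ a j + 1 := by
      intro i hij heq
      have hb : b j < b i := hkey i j hij hjab (by omega)
      have hiS : i ∈ S := (hmemS i).mpr (by omega)
      have := hj1max i hiS
      omega
    -- the intermediate candidate
    set c : Fin n → ℕ := Function.update a j (a j + 1) with hcdef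
    have hcj : c j = a j + 1 := Function.update_self j _ a
    have hci : ∀ i, i ≠ j → c i = a i := fun i hi => Function.update_of_ne hi _ a
    have hac : KeyLT a c := by
      refine ⟨⟨?_, ?_⟩, ?_⟩
      · intro i
        by_cases h : i = j
        · subst h; rw [hcj]; omega
        · rw [hci i h]
      · intro i k hik h1 h2
        by_cases hkj : k = j
        · subst hkj
          rw [hcj]
          rw [hci i hik.ne]
          have := hA i hik
          omega
        · rw [hci k hkj] at h1; omega
      · intro h
        have := congrFun h j
        rw [hcj] at this
        omega
    have hcb : KeyLE c b := by
      constructor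
      · intro i
        by_cases h : i = j
        · subst h; rw [hcj]; omega
        · rw [hci i h]; exact hle i
      · intro i k hik h1 h2
        by_cases hkj : k = j
        · subst hkj
          rw [hcj] at h1 h2
          rw [hci i hik.ne] at h2
          exact hkey i k hik hjab (by omega)
        · rw [hci k hkj] at h1 h2
          have hkS : k ∈ S := (hmemS k).mpr h1
          by_cases hij : i = j
          · subst hij
            rw [hcj] at h2
            rcases lt_or_eq_of_le (Nat.lt_succ_iff.mp h2) with h3 | h3
            · exact hkey i k hik h1 h3

            · -- a k = a j : then k ∈ T, and b k < b j by maximality/tiebreak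
              have hkT : k ∈ T := (hmemT k).mpr ⟨hkS, by omega⟩
              have hbk : b k ≤ b i := by
                have := hj2max k hkT
                omega
              rcases lt_or_eq_of_le hbk with h4 | h4
              · exact h4
              · have hkU : k ∈ U := (hmemU k).mpr ⟨hkT, by omega⟩
                have := hjmax k hkU
                simp only [id] at this
                exact absurd hik (not_lt.mpr this)
          · rw [hci i hij] at h2
            exact hkey i k hik h1 h2
    have hcbe : c = b := by
      by_contra h
      exact hnc ⟨c, hac, hcb, h⟩
    refine ⟨j, ?_, ?_, hA⟩
    · rw [← hcbe, hcj]
    · intro i hi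
      rw [← hcbe, hci i hi]
  · rintro ⟨j, hbj, hbi, hcond⟩
    refine ⟨⟨⟨?_, ?_⟩, ?_⟩, ?_⟩
    · intro i
      by_cases h : i = j
      · subst h; omega
      · rw [hbi i h]
    · intro i k hik h1 h2
      have hkj : k = j := by
        by_contra h
        rw [hbi k h] at h1
        omega
      subst hkj
      rw [hbi i hik.ne, hbj]
      have := hcond i hik
      omega
    · intro h
      have := congrFun h j
      omega
    · rintro ⟨c, ⟨⟨hle1, _⟩, hne1⟩, ⟨hle2, _⟩, hne2⟩
      by_cases h : c j = a j
      · apply hne1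
        funext i
        by_cases hi : i = j
        · subst hi; exact h.symm
        · have h1 := hle1 i
          have h2 := hle2 i
          rw [hbi i hi] at h2
          omega
      · apply hne2
        funext i
        by_cases hi : i = j
        · subst hi
          have h1 := hle1 i
          have h2 := hle2 i
          rw [hbj] at h2 ⊢
          omega
        · have h1 := hle1 i
          have h2 := hle2 i
          rw [hbi i hi] at h2 ⊢
          omega
end

section
/- Let a, b, c be weak compositions of length n. If a ⪯ b and a ⪯ c in the key poset, then a ⪯ b ∩ c, where (b ∩ c)_i = min(b_i, c_i). -/
/-- If a ⪯ b and a ⪯ c then a ⪯ b ∩ c (componentwise minimum). -/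
theorem keyLE_inter {n : ℕ} (a b c : Fin n → ℕ)
    (hb : KeyLE a b) (hc : KeyLE a c) :
    KeyLE a (fun i => min (b i) (c i)) := by
  refine ⟨fun i => le_min (hb.1 i) (hc.1 i), fun i j hij hj hji => ?_⟩
  have hbj := hb.2 i j hij (hj.trans_le (min_le_left _ _)) hji
  have hcj := hc.2 i j hij (hj.trans_le (min_le_right _ _)) hji
  exact min_lt_min hbj hcj
end

section
/- Let a, b, c be weak compositions of length n. If a ⪯ c and b ⪯ c in the key poset, then a ∪ b ⪯ c, where (a ∪ b)_i = max(a_i, b_i). -/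
theorem KeyLE.lt_of_le_of_lt {n : ℕ} {a c : Fin n → ℕ} (h : KeyLE a c) {i j : Fin n}
    (hij : i < j) {m : ℕ} (hm : a j ≤ m) (hmc : m < c j) (hmi : m < a i) : c j < c i :=
  h.2 i j hij (hm.trans_lt hmc) (hm.trans_lt hmi)

/-- If a ⪯ c and b ⪯ c then a ∪ b ⪯ c (componentwise maximum). -/
theorem keyLE_union {n : ℕ} (a b c : Fin n → ℕ)
    (ha : KeyLE a c) (hb : KeyLE b c) :
    KeyLE (fun i => max (a i) (b i)) c := by
  refine ⟨fun i => max_le (ha.1 i) (hb.1 i), fun i j hij hjc hji => ?_⟩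
  rcases lt_max_iff.1 hji with hja | hjb
  · exact ha.lt_of_le_of_lt hij (le_max_left _ _) hjc hja
  · exact hb.lt_of_le_of_lt hij (le_max_right _ _) hjc hjb
end

section
/- The key poset on weak compositions of length 3 is not a lattice: the elements a = (2,1,1) and b = (2,1,2) have two distinct maximal lower bounds, namely (1,1,1) and (1,0,1), so no greatest lower bound exists. -/
/-!
Let `c` be a common lower bound of `(2,1,1)` and `(2,1,2)` lying above `(1,1,1)` or `(1,0,1)`.
Then `c₂ = 1 < 2`, so the key condition for `c ⪯ (2,1,2)` at positions `0 < 2` forces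
`c₀ ≤ c₂ = 1`; above `(1,0,1)` the key condition at `0 < 1` gives `c₁ < c₀` as soon as `c₁ > 0`,
so `c₁ = 0`. Hence both candidates are maximal lower bounds, and a greatest lower bound, lying
above both of them, would have to equal both.
-/

instance {n : ℕ} : DecidableRel (@KeyLE n) := fun a b => by
  unfold KeyLE; infer_instance

theorem not_exists_greatest_lower_bound_of_two_maximal {α : Type*} {r : α → α → Prop}
    {a b m₁ m₂ : α} (hm₁ : r m₁ a ∧ r m₁ b) (hm₂ : r m₂ a ∧ r m₂ b)
    (max₁ : ∀ c, r c a → r c b → r m₁ c → c = m₁)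
    (max₂ : ∀ c, r c a → r c b → r m₂ c → c = m₂) (hne : m₁ ≠ m₂) :
    ¬ ∃ g, r g a ∧ r g b ∧ ∀ c, r c a → r c b → r c g := by
  rintro ⟨g, hga, hgb, hglb⟩
  have hg₁ : g = m₁ := max₁ g hga hgb (hglb m₁ hm₁.1 hm₁.2)
  have hg₂ : g = m₂ := max₂ g hga hgb (hglb m₂ hm₂.1 hm₂.2)
  exact hne (hg₁.symm.trans hg₂)

namespace KeyLE

variable {n : ℕ} {a b : Fin n → ℕ}

theorem le (h : KeyLE a b) (i : Fin n) : a i ≤ b i := h.1 i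

theorem lt_of_lt (h : KeyLE a b) {i j : Fin n} (hij : i < j) (hj : a j < b j)
    (ha : a j < a i) : b j < b i := h.2 i j hij hj ha

theorem le_of_le (h : KeyLE a b) {i j : Fin n} (hij : i < j) (hj : a j < b j)
    (hb : b i ≤ b j) : a i ≤ a j :=
  le_of_not_gt fun ha => (h.lt_of_lt hij hj ha).not_ge hb

end KeyLE

theorem keyLE_111_maximal_lowerBound (c : Fin 3 → ℕ) (h₁ : KeyLE c ![2,1,1])
    (h₂ : KeyLE c ![2,1,2]) (h : KeyLE ![1,1,1] c) : c = ![1,1,1] := by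
  have c1 : c 1 = 1 := le_antisymm (h₁.le 1) (h.le 1)
  have c2 : c 2 = 1 := le_antisymm (h₁.le 2) (h.le 2)
  have c0 : c 0 ≤ c 2 := h₂.le_of_le (i := 0) (j := 2) (by decide) (by simp [c2]) le_rfl
  have c0' : 1 ≤ c 0 := h.le 0
  ext i; fin_cases i <;> simp <;> omega

theorem keyLE_101_maximal_lowerBound (c : Fin 3 → ℕ) (h₁ : KeyLE c ![2,1,1])
    (h₂ : KeyLE c ![2,1,2]) (h : KeyLE ![1,0,1] c) : c = ![1,0,1] := by
  have c2 : c 2 = 1 := le_antisymm (h₁.le 2) (h.le 2)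
  have c0 : c 0 ≤ c 2 := h₂.le_of_le (i := 0) (j := 2) (by decide) (by simp [c2]) le_rfl
  have c1 : c 1 = 0 := by
    by_contra hc1
    have : c 1 < c 0 :=
      h.lt_of_lt (i := 0) (j := 1) (by decide) (Nat.pos_of_ne_zero hc1) (by decide)
    omega
  have c0' : 1 ≤ c 0 := h.le 0
  ext i; fin_cases i <;> simp <;> omega

/-- The key poset is not a lattice: (2,1,1) and (2,1,2) have two distinct
maximal lower bounds, (1,1,1) and (1,0,1), hence no greatest lower bound. -/
theorem keyPoset_not_lattice :
    KeyLE ![1,1,1] ![2,1,1] ∧ KeyLE ![1,1,1] ![2,1,2] ∧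
    KeyLE ![1,0,1] ![2,1,1] ∧ KeyLE ![1,0,1] ![2,1,2] ∧
    (∀ c : Fin 3 → ℕ, KeyLE c ![2,1,1] → KeyLE c ![2,1,2] →
      KeyLE ![1,1,1] c → c = ![1,1,1]) ∧
    (∀ c : Fin 3 → ℕ, KeyLE c ![2,1,1] → KeyLE c ![2,1,2] →
      KeyLE ![1,0,1] c → c = ![1,0,1]) ∧
    (![1,1,1] : Fin 3 → ℕ) ≠ ![1,0,1] ∧
    ¬ ∃ g : Fin 3 → ℕ, KeyLE g ![2,1,1] ∧ KeyLE g ![2,1,2] ∧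
        ∀ c : Fin 3 → ℕ, KeyLE c ![2,1,1] → KeyLE c ![2,1,2] → KeyLE c g := by
  have hne : (![1,1,1] : Fin 3 → ℕ) ≠ ![1,0,1] := by decide
  refine ⟨by decide, by decide, by decide, by decide, keyLE_111_maximal_lowerBound,
    keyLE_101_maximal_lowerBound, hne, ?_⟩
  exact not_exists_greatest_lower_bound_of_two_maximal (by decide) (by decide)
    keyLE_111_maximal_lowerBound keyLE_101_maximal_lowerBound hne
end

section
/- If a ∪ b is an upper bound of a and b in the key poset (i.e., a ⪯ a ∪ b and b ⪯ a ∪ b), then a ∪ b is the unique least upper bound of a and b: any c with a ⪯ c and b ⪯ c satisfies a ∪ b ⪯ c. -/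
theorem sup_keyLE {n : ℕ} {a b c : Fin n → ℕ} (hac : KeyLE a c) (hbc : KeyLE b c) :
    KeyLE (a ⊔ b) c := by
  refine ⟨fun i => sup_le (hac.1 i) (hbc.1 i), fun i j hij hjc hji => ?_⟩
  -- Whichever of `a`, `b` realizes `(a ⊔ b) i` witnesses the descent at `(i, j)` below `c`.
  have descent {x : Fin n → ℕ} (hxc : KeyLE x c) (hxj : x j ≤ (a ⊔ b) j)
      (hxi : (a ⊔ b) j < x i) : c j < c i :=
    hxc.2 i j hij (hxj.trans_lt hjc) (hxj.trans_lt hxi)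
  rcases lt_sup_iff.1 hji with h | h
  · exact descent hac le_sup_left h
  · exact descent hbc le_sup_right h

theorem union_least_upper_bound_general {n : ℕ} (a b : Fin n → ℕ) :
    ∀ c : Fin n → ℕ, KeyLE a c → KeyLE b c →
      KeyLE (fun i => max (a i) (b i)) c :=
  fun _ hac hbc => sup_keyLE hac hbc

/-- If a ∪ b is an upper bound of a and b in the key poset, then it is the
unique least upper bound: any common upper bound c satisfies a ∪ b ⪯ c. -/
theorem union_least_upper_bound {n : ℕ} (a b : Fin n → ℕ)
    (ha : KeyLE a (fun i => max (a i) (b i)))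
    (hb : KeyLE b (fun i => max (a i) (b i))) :
    ∀ c : Fin n → ℕ, KeyLE a c → KeyLE b c →
      KeyLE (fun i => max (a i) (b i)) c :=
  union_least_upper_bound_general a b
end

section
/- If a ∩ b is a lower bound of a and b in the key poset (i.e., a ∩ b ⪯ a and a ∩ b ⪯ b), then a ∩ b is the unique greatest lower bound: any c with c ⪯ a and c ⪯ b satisfies c ⪯ a ∩ b. -/
theorem KeyLE.le_min {n : ℕ} {a b c : Fin n → ℕ} (hca : KeyLE c a) (hcb : KeyLE c b) :
    KeyLE c (fun i => min (a i) (b i)) := by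
  refine ⟨fun i => _root_.le_min (hca.1 i) (hcb.1 i), fun i j hij hcj hci => ?_⟩
  rw [lt_min_iff] at hcj
  have hai : a j < a i := hca.2 i j hij hcj.1 hci
  have hbi : b j < b i := hcb.2 i j hij hcj.2 hci
  exact lt_min (min_lt_of_left_lt hai) (min_lt_of_right_lt hbi)

theorem inter_greatest_lower_bound_general {n : ℕ} (a b : Fin n → ℕ) :
    ∀ c : Fin n → ℕ, KeyLE c a → KeyLE c b →
      KeyLE c (fun i => min (a i) (b i)) :=
  fun _ hca hcb => hca.le_min hcb

/-- If a ∩ b is a lower bound of a and b in the key poset, then it is the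
unique greatest lower bound: any common lower bound c satisfies c ⪯ a ∩ b. -/
theorem inter_greatest_lower_bound {n : ℕ} (a b : Fin n → ℕ)
    (ha : KeyLE (fun i => min (a i) (b i)) a)
    (hb : KeyLE (fun i => min (a i) (b i)) b) :
    ∀ c : Fin n → ℕ, KeyLE c a → KeyLE c b →
      KeyLE c (fun i => min (a i) (b i)) :=
  inter_greatest_lower_bound_general a b
end

section
/- Saturated chains ∅ = a^(0) ⋖ a^(1) ⋖ ... ⋖ a^(n) = a in the key poset from the zero composition to a weak composition a of rank n are in bijection with standard key tableaux of shape a, via placing the entry n−i+1 in the unique cell of a^(i) \ a^(i−1). -/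
/-- A cell of the key diagram of `a`: a pair (row, column), 0-indexed, with
column < a row. -/
def KeyCell {n : ℕ} (a : Fin n → ℕ) := {p : Fin n × ℕ // p.2 < a p.1}

/-- A standard key tableau of shape `a` with `N = rk a` cells, recorded as a
bijective filling of the key diagram by values `Fin N` (value `v` encodes the
1-indexed entry `v+1`): rows decrease left to right, and whenever an entry in
a higher row is smaller than the entry below it in the same column, the cell
immediately to the right of the lower cell exists and carries a larger entry
than the upper one. -/
def IsSKT {n N : ℕ} (a : Fin n → ℕ) (T : KeyCell a → Fin N) : Prop :=
  Function.Bijective T ∧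
  (∀ p q : KeyCell a, p.1.1 = q.1.1 → p.1.2 < q.1.2 → T q < T p) ∧
  (∀ p q : KeyCell a, p.1.1 < q.1.1 → p.1.2 = q.1.2 → T q < T p →
    ∃ h : p.1.2 + 1 < a p.1.1, T q < T ⟨(p.1.1, p.1.2 + 1), h⟩)

/-- A saturated chain of length `N` in the key poset from the empty (zero)
weak composition to `a`. -/
def KeyChainTo {n N : ℕ} (a : Fin n → ℕ) (f : Fin (N + 1) → Fin n → ℕ) : Prop :=
  f 0 = (fun _ => 0) ∧ f (Fin.last N) = a ∧
    ∀ k : ℕ, ∀ hk : k < N,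
      KeyCovers (f ⟨k, by omega⟩) (f ⟨k + 1, by omega⟩)


namespace KeyProof

lemma keyLT_sum {n : ℕ} {a b : Fin n → ℕ} (h : KeyLT a b) : ∑ i, a i < ∑ i, b i := by
  obtain ⟨⟨hle, _⟩, hne⟩ := h
  obtain ⟨i, hi⟩ := Function.ne_iff.mp hne
  exact Finset.sum_lt_sum (fun i _ => hle i) ⟨i, Finset.mem_univ i, lt_of_le_of_ne (hle i) hi⟩

lemma covers_iff {n : ℕ} (a b : Fin n → ℕ) :
    KeyCovers a b ↔
      ∃ j, (∀ i, i < j → a i ≠ a j + 1) ∧ b = Function.update a j (a j + 1) := by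
  constructor
  · rintro ⟨⟨⟨hle, hcond⟩, hne⟩, hnoc⟩
    have hslt : ∑ i, a i < ∑ i, b i := keyLT_sum ⟨⟨hle, hcond⟩, hne⟩
    have hsum : ∑ i, b i = ∑ i, a i + 1 := by
      by_contra hcon
      have h2 : ∑ i, a i + 2 ≤ ∑ i, b i := by omega
      have hS : (Finset.univ.filter (fun j => a j < b j)).Nonempty := by
        obtain ⟨i, hi⟩ := Function.ne_iff.mp hne
        exact ⟨i, by simp [lt_of_le_of_ne (hle i) hi]⟩
      set S := Finset.univ.filter (fun j => a j < b j) with hSdef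
      set m := S.inf' hS b with hm
      have hS' : (S.filter (fun j => b j = m)).Nonempty := by
        obtain ⟨j, hj, hjm⟩ := Finset.exists_mem_eq_inf' hS b
        exact ⟨j, Finset.mem_filter.mpr ⟨hj, hjm.symm⟩⟩
      set j := (S.filter (fun j => b j = m)).min' hS' with hj
      have hjmem : j ∈ S.filter (fun i => b i = m) := Finset.min'_mem _ _
      rw [Finset.mem_filter] at hjmem
      obtain ⟨hjS, hjval⟩ := hjmem
      have hjab : a j < b j := (Finset.mem_filter.mp hjS).2
      have hminval : ∀ i, a i < b i → m ≤ b i := by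
        intro i hi
        exact Finset.inf'_le b (by simp [hSdef, hi])
      have hjminidx : ∀ i, a i < b i → b i = m → j ≤ i := by
        intro i hi hbi
        refine Finset.min'_le _ i ?_
        simp only [Finset.mem_filter, hSdef, Finset.mem_univ, true_and]
        exact ⟨hi, hbi⟩
      have hA : ∀ i, i < j → b i ≠ b j := by
        intro i hij hbi
        by_cases hiS : a i < b i
        · exact absurd (hjminidx i hiS (hbi.trans hjval)) (not_le.mpr hij)
        · have hieq : a i = b i := le_antisymm (hle i) (not_lt.mp hiS)
          have haj : a j < a i := by omega
          have := hcond i j hij hjab haj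
          omega
      set c := Function.update b j (b j - 1) with hc
      have hcj : c j = b j - 1 := Function.update_self _ _ _
      have hci : ∀ i, i ≠ j → c i = b i := fun i hi => Function.update_of_ne hi _ _
      have hsc : ∑ i, c i = ∑ i, b i - 1 := by
        rw [hc, Finset.sum_update_of_mem (Finset.mem_univ j),
          Finset.sdiff_singleton_eq_erase]
        have := Finset.sum_erase_add Finset.univ b (Finset.mem_univ j)
        omega
      apply hnoc
      refine ⟨c, ⟨⟨?_, ?_⟩, ?_⟩, ⟨⟨?_, ?_⟩, ?_⟩⟩
      · intro i
        by_cases hij : i = j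
        · rw [hij, hcj]; omega
        · rw [hci i hij]; exact hle i
      · intro i i' hii' h1 h2
        by_cases hi'j : i' = j
        · have hij : i ≠ j := by rw [← hi'j]; exact ne_of_lt hii'
          have hai : a j < a i := by rw [← hi'j]; exact h2
          have hb := hcond i j (by rw [← hi'j]; exact hii') hjab hai
          rw [hi'j, hcj, hci i hij]
          omega
        · rw [hci i' hi'j] at h1 ⊢
          by_cases hij : i = j
          · exfalso
            have h2' : a i' < a j := by rw [← hij]; exact h2
            have hbi' := hminval i' h1
            have hbjm : b j = m := hjval
            have := hcond j i' (by rw [← hij]; exact hii') h1 h2'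
            omega
          · rw [hci i hij]
            exact hcond i i' hii' h1 h2
      · intro hac
        rw [hac] at h2
        omega
      · intro i
        by_cases hij : i = j
        · rw [hij, hcj]; omega
        · rw [hci i hij]
      · intro i i' hii' h1 h2
        by_cases hi'j : i' = j
        · have hij : i ≠ j := by rw [← hi'j]; exact ne_of_lt hii'
          rw [hci i hij] at h2
          rw [hi'j, hcj] at h2
          rw [hi'j]
          have := hA i (by rw [← hi'j]; exact hii')
          omega
        · rw [hci i' hi'j] at h1
          omega
      · intro hcb
        rw [hcb] at hsc
        omega
    have hdiff : ∑ i, (b i - a i) = 1 := by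
      have : ∑ i, b i = ∑ i, a i + ∑ i, (b i - a i) := by
        rw [← Finset.sum_add_distrib]
        exact Finset.sum_congr rfl (fun i _ => by have := hle i; omega)
      omega
    have hex : ∃ j, 0 < b j - a j := by
      by_contra hcon
      push_neg at hcon
      have : ∑ i, (b i - a i) = 0 := Finset.sum_eq_zero (fun i _ => by have := hcon i; omega)
      omega
    obtain ⟨j, hjpos⟩ := hex
    have hsplit : (b j - a j) + ∑ i ∈ Finset.univ.erase j, (b i - a i) = ∑ i, (b i - a i) :=
      Finset.add_sum_erase _ (fun i => b i - a i) (Finset.mem_univ j)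
    have hrest : ∀ i, i ≠ j → b i = a i := by
      intro i hij
      have h0 : ∑ i ∈ Finset.univ.erase j, (b i - a i) = 0 := by omega
      have := (Finset.sum_eq_zero_iff).mp h0 i (Finset.mem_erase.mpr ⟨hij, Finset.mem_univ i⟩)
      have := hle i
      omega
    have hbj : b j = a j + 1 := by
      have := hle j
      omega
    refine ⟨j, ?_, ?_⟩
    · intro i hij hai
      have hab : a j < b j := by omega
      have := hcond i j hij hab (by omega)
      rw [hrest i (ne_of_lt hij)] at this
      omega
    · funext i
      by_cases hij : i = j
      · rw [hij, Function.update_self]; exact hbj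
      · rw [Function.update_of_ne hij, hrest i hij]
  · rintro ⟨j, hcnd, rfl⟩
    set b := Function.update a j (a j + 1) with hb
    have hbj : b j = a j + 1 := Function.update_self _ _ _
    have hbi : ∀ i, i ≠ j → b i = a i := fun i hi => Function.update_of_ne hi _ _
    have hlt : KeyLT a b := by
      refine ⟨⟨?_, ?_⟩, ?_⟩
      · intro i
        by_cases hij : i = j
        · rw [hij, hbj]; omega
        · rw [hbi i hij]
      · intro i i' hii' h1 h2
        by_cases hi'j : i' = j
        · have hij : i ≠ j := by rw [← hi'j]; exact ne_of_lt hii'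
          have := hcnd i (by rw [← hi'j]; exact hii')
          have h2' : a j < a i := by rw [← hi'j]; exact h2
          rw [hbi i hij, hi'j, hbj]
          omega
        · rw [hbi i' hi'j] at h1
          omega
      · intro hab
        have := congrFun hab j
        rw [hbj] at this
        omega
    refine ⟨hlt, ?_⟩
    rintro ⟨c, hac, hcb⟩
    have h1 := keyLT_sum hac
    have h2 := keyLT_sum hcb
    have hsb : ∑ i, b i = ∑ i, a i + 1 := by
      rw [hb, Finset.sum_update_of_mem (Finset.mem_univ j),
        Finset.sdiff_singleton_eq_erase]
      have := Finset.sum_erase_add Finset.univ a (Finset.mem_univ j)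
      omega
    omega

end KeyProof

namespace KeyProof

variable {n N : ℕ} {a : Fin n → ℕ} {f : Fin (N + 1) → Fin n → ℕ}

def gOf (f : Fin (N + 1) → Fin n → ℕ) : ℕ → Fin n → ℕ :=
  fun k => f ⟨min k N, by omega⟩

lemma gOf_eq (f : Fin (N + 1) → Fin n → ℕ) {k : ℕ} (hk : k ≤ N) :
    gOf f k = f ⟨k, by omega⟩ := by
  unfold gOf
  exact congrArg f (Fin.ext (Nat.min_eq_left hk))

lemma g0 (hf : KeyChainTo a f) : gOf f 0 = fun _ => 0 := by
  rw [gOf_eq f (Nat.zero_le N)]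
  have h0 : (⟨0, by omega⟩ : Fin (N + 1)) = 0 := Fin.ext rfl
  rw [h0]
  exact hf.1

lemma gtop (hf : KeyChainTo a f) {k : ℕ} (hk : N ≤ k) : gOf f k = a := by
  unfold gOf
  have hm : min k N = N := Nat.min_eq_right hk
  have h0 : (⟨min k N, by omega⟩ : Fin (N + 1)) = Fin.last N := Fin.ext (by simp [hm])
  rw [h0]
  exact hf.2.1

lemma gstep (hf : KeyChainTo a f) {k : ℕ} (hk : k < N) :
    ∃ j, (∀ i, i < j → gOf f k i ≠ gOf f k j + 1) ∧
      gOf f (k + 1) = Function.update (gOf f k) j (gOf f k j + 1) := by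
  have h := hf.2.2 k hk
  rw [covers_iff] at h
  obtain ⟨j, h1, h2⟩ := h
  rw [gOf_eq f (le_of_lt hk), gOf_eq f (by omega)]
  exact ⟨j, h1, h2⟩

lemma gmono1 (hf : KeyChainTo a f) (k : ℕ) (r : Fin n) :
    gOf f k r ≤ gOf f (k + 1) r := by
  rcases Nat.lt_or_ge k N with hk | hk
  · obtain ⟨j, _, hup⟩ := gstep hf hk
    rw [hup]
    by_cases hrj : r = j
    · rw [hrj, Function.update_self]; omega
    · rw [Function.update_of_ne hrj]
  · rw [gtop hf hk, gtop hf (by omega)]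

lemma gmono (hf : KeyChainTo a f) {k k' : ℕ} (hkk : k ≤ k') (r : Fin n) :
    gOf f k r ≤ gOf f k' r :=
  monotone_nat_of_le_succ (f := fun k => gOf f k r) (fun k => gmono1 hf k r) hkk

lemma gle_a (hf : KeyChainTo a f) (k : ℕ) (r : Fin n) : gOf f k r ≤ a r :=
  le_trans (gmono hf (le_max_left k N) r) (by rw [gtop hf (le_max_right k N)])

lemma kOf_ex (hf : KeyChainTo a f) (p : KeyCell a) : ∃ k, (p.1.2 : ℕ) < gOf f k p.1.1 :=
  ⟨N, by rw [gtop hf le_rfl]; exact p.2⟩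

noncomputable def kOf (hf : KeyChainTo a f) (p : KeyCell a) : ℕ := Nat.find (kOf_ex hf p)

lemma kOf_spec (hf : KeyChainTo a f) (p : KeyCell a) :
    p.1.2 < gOf f (kOf hf p) p.1.1 := Nat.find_spec (kOf_ex hf p)

lemma kOf_min (hf : KeyChainTo a f) (p : KeyCell a) {m : ℕ} (hm : m < kOf hf p) :
    gOf f m p.1.1 ≤ p.1.2 := not_lt.mp (Nat.find_min (kOf_ex hf p) hm)

lemma kOf_le (hf : KeyChainTo a f) (p : KeyCell a) : kOf hf p ≤ N :=
  Nat.find_le (by rw [gtop hf le_rfl]; exact p.2)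

lemma kOf_pos (hf : KeyChainTo a f) (p : KeyCell a) : 1 ≤ kOf hf p := by
  by_contra h
  have h0 : kOf hf p = 0 := by omega
  have := kOf_spec hf p
  rw [h0, g0 hf] at this
  exact absurd this (by simp)

lemma cell_step (hf : KeyChainTo a f) (p : KeyCell a) :
    gOf f (kOf hf p - 1) p.1.1 = p.1.2 ∧
    gOf f (kOf hf p) = Function.update (gOf f (kOf hf p - 1)) p.1.1 (p.1.2 + 1) ∧
    (∀ i, i < p.1.1 → gOf f (kOf hf p - 1) i ≠ p.1.2 + 1) := by
  have hk1 := kOf_pos hf p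
  have hkN := kOf_le hf p
  obtain ⟨j, hcnd, hup⟩ := gstep hf (show kOf hf p - 1 < N by omega)
  have hk' : kOf hf p - 1 + 1 = kOf hf p := by omega
  rw [hk'] at hup
  have hspec := kOf_spec hf p
  have hmin := kOf_min hf p (show kOf hf p - 1 < kOf hf p by omega)
  have hrj : p.1.1 = j := by
    by_contra hne
    rw [hup, Function.update_of_ne hne] at hspec
    omega
  subst hrj
  have hgp : gOf f (kOf hf p) p.1.1 = gOf f (kOf hf p - 1) p.1.1 + 1 := by
    rw [hup, Function.update_self]
  have hcol : gOf f (kOf hf p - 1) p.1.1 = p.1.2 := by omega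
  refine ⟨hcol, ?_, ?_⟩
  · rw [hup, hcol]
  · intro i hi
    rw [← hcol]
    exact hcnd i hi

noncomputable def Tab (hf : KeyChainTo a f) : KeyCell a → Fin N :=
  fun p => ⟨N - kOf hf p, by
    have h1 := kOf_pos hf p
    have h2 := kOf_le hf p
    omega⟩

lemma tab_val (hf : KeyChainTo a f) (p : KeyCell a) : (Tab hf p : ℕ) = N - kOf hf p := rfl

lemma tab_inj (hf : KeyChainTo a f) : Function.Injective (Tab hf) := by
  intro p q h
  have hval : N - kOf hf p = N - kOf hf q := congrArg Fin.val h
  have hk : kOf hf p = kOf hf q := by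
    have := kOf_pos hf p; have := kOf_le hf p
    have := kOf_pos hf q; have := kOf_le hf q
    omega
  obtain ⟨hp1, hp2, _⟩ := cell_step hf p
  obtain ⟨hq1, hq2, _⟩ := cell_step hf q
  rw [hk] at hp1 hp2
  have hrow : p.1.1 = q.1.1 := by
    by_contra hne
    have e1 := congrFun hp2 q.1.1
    rw [Function.update_of_ne (Ne.symm hne)] at e1
    have e2 := congrFun hq2 q.1.1
    rw [Function.update_self] at e2
    rw [hq1] at e1
    omega
  have hcol : p.1.2 = q.1.2 := by rw [← hp1, hrow, hq1]
  exact Subtype.ext (Prod.ext hrow hcol)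

lemma tab_surj (hf : KeyChainTo a f) : Function.Surjective (Tab hf) := by
  intro v
  set k := N - (v : ℕ) with hkdef
  have hvN : (v : ℕ) < N := v.2
  have hk1 : 1 ≤ k := by omega
  have hkN : k ≤ N := by omega
  obtain ⟨j, hcnd, hup⟩ := gstep hf (show k - 1 < N by omega)
  have hk' : k - 1 + 1 = k := by omega
  rw [hk'] at hup
  have hgk : gOf f k j = gOf f (k - 1) j + 1 := by rw [hup, Function.update_self]
  have hcell : gOf f (k - 1) j < a j := by
    have := gle_a hf k j
    omega
  refine ⟨⟨(j, gOf f (k - 1) j), hcell⟩, ?_⟩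
  have hko : kOf hf ⟨(j, gOf f (k - 1) j), hcell⟩ = k := by
    unfold kOf
    rw [Nat.find_eq_iff]
    constructor
    · show gOf f (k - 1) j < gOf f k j
      omega
    · intro m hm
      simp only [not_lt]
      show gOf f m j ≤ gOf f (k - 1) j
      exact gmono hf (by omega) j
  apply Fin.ext
  erw [tab_val, hko]
  omega

lemma tab_row (hf : KeyChainTo a f) (p q : KeyCell a) (hrow : p.1.1 = q.1.1)
    (hcol : p.1.2 < q.1.2) : Tab hf q < Tab hf p := by
  obtain ⟨hq1, _, _⟩ := cell_step hf q
  have hsp : (p.1.2 : ℕ) < gOf f (kOf hf q - 1) p.1.1 := by rw [hrow, hq1]; exact hcol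
  have hle : kOf hf p ≤ kOf hf q - 1 := Nat.find_le hsp
  have h1 := kOf_pos hf p
  have h2 := kOf_le hf p
  have h3 := kOf_pos hf q
  have h4 := kOf_le hf q
  show (Tab hf q : ℕ) < (Tab hf p : ℕ)
  rw [tab_val, tab_val]
  omega

lemma tab_col (hf : KeyChainTo a f) (p q : KeyCell a) (hrow : p.1.1 < q.1.1)
    (hcol : p.1.2 = q.1.2) (hT : Tab hf q < Tab hf p) :
    ∃ h : p.1.2 + 1 < a p.1.1, Tab hf q < Tab hf ⟨(p.1.1, p.1.2 + 1), h⟩ := by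
  have h1 := kOf_pos hf p
  have h2 := kOf_le hf p
  have h3 := kOf_pos hf q
  have h4 := kOf_le hf q
  have hval : (Tab hf q : ℕ) < (Tab hf p : ℕ) := hT
  rw [tab_val, tab_val] at hval
  have hpq : kOf hf p < kOf hf q := by omega
  obtain ⟨hp1, hp2, _⟩ := cell_step hf p
  obtain ⟨_, _, hq3⟩ := cell_step hf q
  have hgkp : gOf f (kOf hf p) p.1.1 = p.1.2 + 1 := by rw [hp2, Function.update_self]
  have hmono : p.1.2 + 1 ≤ gOf f (kOf hf q - 1) p.1.1 := by
    rw [← hgkp]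
    exact gmono hf (by omega) p.1.1
  have hne := hq3 p.1.1 hrow
  rw [← hcol] at hne
  have hstrict : p.1.2 + 2 ≤ gOf f (kOf hf q - 1) p.1.1 := by omega
  have hcell : p.1.2 + 1 < a p.1.1 := by
    have := gle_a hf (kOf hf q - 1) p.1.1
    omega
  refine ⟨hcell, ?_⟩
  have hko : kOf hf ⟨(p.1.1, p.1.2 + 1), hcell⟩ ≤ kOf hf q - 1 :=
    Nat.find_le (by show (p.1.2 + 1 : ℕ) < gOf f (kOf hf q - 1) p.1.1; omega)
  show (Tab hf q : ℕ) < (Tab hf ⟨(p.1.1, p.1.2 + 1), hcell⟩ : ℕ)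
  erw [tab_val, tab_val]
  omega

end KeyProof

namespace KeyProof

variable {n N : ℕ} {a : Fin n → ℕ} {T : KeyCell a → Fin N} {f : Fin (N + 1) → Fin n → ℕ}

def Tnat (T : KeyCell a → Fin N) : Fin n → ℕ → ℕ :=
  fun r c => if h : c < a r then (T ⟨(r, c), h⟩ : ℕ) else 0

lemma Tnat_eq (T : KeyCell a → Fin N) {r : Fin n} {c : ℕ} (h : c < a r) :
    Tnat T r c = (T ⟨(r, c), h⟩ : ℕ) := dif_pos h

def cnt (T : KeyCell a → Fin N) (k : ℕ) (r : Fin n) : ℕ :=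
  ((Finset.range (a r)).filter (fun c => N ≤ Tnat T r c + k)).card

lemma Tnat_lt (hT : IsSKT a T) {r : Fin n} {c c' : ℕ} (hcc : c' < c) (hc : c < a r) :
    Tnat T r c < Tnat T r c' := by
  rw [Tnat_eq T hc, Tnat_eq T (hcc.trans hc)]
  exact hT.2.1 ⟨(r, c'), hcc.trans hc⟩ ⟨(r, c), hc⟩ rfl hcc

lemma Tnat_lt_N (T : KeyCell a → Fin N) {r : Fin n} {c : ℕ} (h : c < a r) :
    Tnat T r c < N := by
  rw [Tnat_eq T h]
  exact (T ⟨(r, c), h⟩).2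

lemma mem_cnt (hT : IsSKT a T) {k : ℕ} {r : Fin n} {c : ℕ} (hc : c < a r) :
    c < cnt T k r ↔ N ≤ Tnat T r c + k := by
  set S := (Finset.range (a r)).filter (fun c => N ≤ Tnat T r c + k) with hS
  have hmem : ∀ x, x ∈ S ↔ (x < a r ∧ N ≤ Tnat T r x + k) := by
    intro x
    rw [hS, Finset.mem_filter, Finset.mem_range]
  have hdc : ∀ c' c'', c'' ∈ S → c' < c'' → c' ∈ S := by
    intro c' c'' h hlt
    rw [hmem] at h ⊢
    obtain ⟨h1, h2⟩ := h
    have := Tnat_lt hT hlt h1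
    exact ⟨hlt.trans h1, by omega⟩
  constructor
  · intro h
    by_contra hcon
    push_neg at hcon
    have hsub : S ⊆ Finset.range c := by
      intro x hx
      rw [Finset.mem_range]
      by_contra hxc
      push_neg at hxc
      rcases eq_or_lt_of_le hxc with he | hl
      · rw [← he] at hx
        have := (hmem c).mp hx
        omega
      · have := (hmem c).mp (hdc c x hx hl)
        omega
    have := Finset.card_le_card hsub
    rw [Finset.card_range] at this
    change c < S.card at h
    omega
  · intro h
    have hsub : Finset.range (c + 1) ⊆ S := by
      intro x hx
      rw [Finset.mem_range] at hx
      rcases eq_or_lt_of_le (Nat.lt_succ_iff.mp hx) with he | hl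
      · rw [he, hmem]
        exact ⟨hc, h⟩
      · exact hdc x c ((hmem c).mpr ⟨hc, h⟩) hl
    have := Finset.card_le_card hsub
    rw [Finset.card_range] at this
    change c < S.card
    omega

lemma cnt_le (T : KeyCell a → Fin N) (k : ℕ) (r : Fin n) : cnt T k r ≤ a r :=
  (Finset.card_filter_le _ _).trans (le_of_eq (Finset.card_range _))

lemma cnt0 (T : KeyCell a → Fin N) (r : Fin n) : cnt T 0 r = 0 := by
  rw [cnt, Finset.card_eq_zero, Finset.filter_eq_empty_iff]
  intro c hc
  rw [Finset.mem_range] at hc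
  have := Tnat_lt_N T hc
  omega

lemma cntN (T : KeyCell a → Fin N) {k : ℕ} (hk : N ≤ k) (r : Fin n) : cnt T k r = a r := by
  rw [cnt, Finset.filter_true_of_mem (fun c _ => by omega), Finset.card_range]

lemma cnt_row (hT : IsSKT a T) {k : ℕ} {q : KeyCell a} (hq : (T q : ℕ) + k + 1 = N) :
    cnt T k q.1.1 = q.1.2 := by
  have hTq : Tnat T q.1.1 q.1.2 = (T q : ℕ) := by
    rw [Tnat_eq T q.2]
    have hqq : (⟨(q.1.1, q.1.2), q.2⟩ : KeyCell a) = q := Subtype.ext rfl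
    rw [hqq]
  have hub : ¬ q.1.2 < cnt T k q.1.1 := by
    rw [mem_cnt hT q.2, hTq]
    omega
  have hqa := q.2
  have hlb : q.1.2 ≤ cnt T k q.1.1 := by
    rcases Nat.eq_zero_or_pos q.1.2 with h0 | h0
    · omega
    · have : q.1.2 - 1 < cnt T k q.1.1 := by
        rw [mem_cnt hT (by omega : q.1.2 - 1 < a q.1.1)]
        have := Tnat_lt hT (by omega : q.1.2 - 1 < q.1.2) q.2
        rw [hTq] at this
        omega
      omega
  omega

lemma cnt_succ (hT : IsSKT a T) {k : ℕ} {q : KeyCell a} (hq : (T q : ℕ) + k + 1 = N)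
    (r : Fin n) :
    cnt T (k + 1) r = if r = q.1.1 then cnt T k r + 1 else cnt T k r := by
  have hsplit : (Finset.range (a r)).filter (fun c => N ≤ Tnat T r c + (k + 1)) =
      ((Finset.range (a r)).filter (fun c => N ≤ Tnat T r c + k)) ∪
      ((Finset.range (a r)).filter (fun c => Tnat T r c + (k + 1) = N)) := by
    ext c
    simp only [Finset.mem_filter, Finset.mem_union, Finset.mem_range]
    omega
  have hdisj : Disjoint ((Finset.range (a r)).filter (fun c => N ≤ Tnat T r c + k))
      ((Finset.range (a r)).filter (fun c => Tnat T r c + (k + 1) = N)) := by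
    rw [Finset.disjoint_left]
    intro c h1 h2
    rw [Finset.mem_filter] at h1 h2
    omega
  have hE : ((Finset.range (a r)).filter (fun c => Tnat T r c + (k + 1) = N)) =
      if r = q.1.1 then {q.1.2} else ∅ := by
    ext c
    simp only [Finset.mem_filter, Finset.mem_range]
    constructor
    · rintro ⟨hcr, hcond⟩
      have hcell : T ⟨(r, c), hcr⟩ = T q := by
        apply Fin.ext
        rw [← Tnat_eq T hcr]
        omega
      have := hT.1.1 hcell
      have hr : r = q.1.1 := congrArg (fun x => x.1.1) this
      have hc : c = q.1.2 := congrArg (fun x => x.1.2) this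
      rw [if_pos hr]
      simp [hc]
    · intro hc
      by_cases hr : r = q.1.1
      · rw [if_pos hr] at hc
        rw [Finset.mem_singleton] at hc
        subst hc
        subst hr
        refine ⟨q.2, ?_⟩
        rw [Tnat_eq T q.2]
        have hqq : (⟨(q.1.1, q.1.2), q.2⟩ : KeyCell a) = q := Subtype.ext rfl
        rw [hqq]
        omega
      · rw [if_neg hr] at hc
        exact absurd hc (Finset.notMem_empty _)
  rw [cnt, hsplit, Finset.card_union_of_disjoint hdisj, hE]
  by_cases hr : r = q.1.1
  · rw [if_pos hr, if_pos hr]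
    simp [cnt]
  · rw [if_neg hr, if_neg hr]
    simp [cnt]

/-- The chain associated to an SKT. -/
def fInv (T : KeyCell a → Fin N) : Fin (N + 1) → Fin n → ℕ :=
  fun k r => cnt T k.1 r

lemma fInv_chain (hT : IsSKT a T) : KeyChainTo a (fInv T) := by
  refine ⟨?_, ?_, ?_⟩
  · funext r
    exact cnt0 T r
  · funext r
    exact cntN T le_rfl r
  · intro k hk
    rw [covers_iff]
    obtain ⟨q, hq⟩ := hT.1.2 ⟨N - 1 - k, by omega⟩
    have hqv : (T q : ℕ) + k + 1 = N := by
      have h5 : (T q : ℕ) = N - 1 - k := by rw [hq]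
      omega
    refine ⟨q.1.1, ?_, ?_⟩
    · intro i hi hcon
      have hrow : cnt T k q.1.1 = q.1.2 := cnt_row hT hqv
      change cnt T k i = cnt T k q.1.1 + 1 at hcon
      rw [hrow] at hcon
      have hqa : q.1.2 < a i := by
        have := cnt_le T k i
        change cnt T k i = q.1.2 + 1 at hcon
        omega
      have hmem : N ≤ Tnat T i q.1.2 + k := by
        rw [← mem_cnt hT hqa]
        change q.1.2 < cnt T k i
        omega
      have hTlt : T q < T ⟨(i, q.1.2), hqa⟩ := by
        change (T q : ℕ) < (T ⟨(i, q.1.2), hqa⟩ : ℕ)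
        have h6 : Tnat T i q.1.2 = (T ⟨(i, q.1.2), hqa⟩ : ℕ) := Tnat_eq T hqa
        omega
      obtain ⟨hnext, hgt⟩ := hT.2.2 ⟨(i, q.1.2), hqa⟩ q hi rfl hTlt
      change q.1.2 + 1 < a i at hnext
      have h9 : q.1.2 + 1 < cnt T k i := by
        rw [mem_cnt hT hnext]
        have h6 : Tnat T i (q.1.2 + 1) = (T ⟨(i, q.1.2 + 1), hnext⟩ : ℕ) := Tnat_eq T hnext
        have h7 : (T q : ℕ) < (T ⟨(i, q.1.2 + 1), hnext⟩ : ℕ) := hgt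
        omega
      omega
    · funext r
      show cnt T (k + 1) r = Function.update (fun r => cnt T k r) q.1.1
        ((fun r => cnt T k r) q.1.1 + 1) r
      rw [cnt_succ hT hqv r]
      by_cases hr : r = q.1.1
      · rw [if_pos hr, hr, Function.update_self]
      · rw [if_neg hr, Function.update_of_ne hr]

lemma gOf_fInv (T : KeyCell a → Fin N) (k : ℕ) : gOf (fInv T) k = cnt T (min k N) := rfl

lemma tab_fInv (hT : IsSKT a T) (p : KeyCell a) :
    Tab (fInv_chain hT) p = T p := by
  have hvN : (T p : ℕ) < N := (T p).2
  have hko : kOf (fInv_chain hT) p = N - (T p : ℕ) := by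
    rw [kOf, Nat.find_eq_iff]
    constructor
    · show (p.1.2 : ℕ) < gOf (fInv T) (N - (T p : ℕ)) p.1.1
      rw [gOf_fInv, Nat.min_eq_left (by omega)]
      rw [mem_cnt hT p.2, Tnat_eq T p.2]
      have : (⟨(p.1.1, p.1.2), p.2⟩ : KeyCell a) = p := Subtype.ext rfl
      rw [this]
      omega
    · intro m hm
      simp only [not_lt]
      show gOf (fInv T) m p.1.1 ≤ p.1.2
      rw [gOf_fInv, Nat.min_eq_left (by omega)]
      by_contra hcon
      push_neg at hcon
      rw [mem_cnt hT p.2, Tnat_eq T p.2] at hcon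
      have : (⟨(p.1.1, p.1.2), p.2⟩ : KeyCell a) = p := Subtype.ext rfl
      rw [this] at hcon
      omega
  apply Fin.ext
  rw [tab_val, hko]
  omega

lemma cnt_tab (hf : KeyChainTo a f) {k : ℕ} (hk : k ≤ N) (r : Fin n) :
    cnt (Tab hf) k r = gOf f k r := by
  have hfilter : (Finset.range (a r)).filter (fun c => N ≤ Tnat (Tab hf) r c + k) =
      Finset.range (gOf f k r) := by
    ext c
    simp only [Finset.mem_filter, Finset.mem_range]
    constructor
    · rintro ⟨h1, h2⟩
      erw [Tnat_eq (Tab hf) h1, tab_val] at h2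
      have hle := kOf_le hf ⟨(r, c), h1⟩
      have hkk : kOf hf ⟨(r, c), h1⟩ ≤ k := by omega
      have hspec := kOf_spec hf ⟨(r, c), h1⟩
      calc c < gOf f (kOf hf ⟨(r, c), h1⟩) r := hspec
        _ ≤ gOf f k r := gmono hf hkk r
    · intro h
      have h1 : c < a r := lt_of_lt_of_le h (gle_a hf k r)
      refine ⟨h1, ?_⟩
      erw [Tnat_eq (Tab hf) h1, tab_val]
      have hkk : kOf hf ⟨(r, c), h1⟩ ≤ k := Nat.find_le h
      have hle := kOf_le hf ⟨(r, c), h1⟩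
      omega
  rw [cnt, hfilter, Finset.card_range]

noncomputable def Phi : {f : Fin (N + 1) → Fin n → ℕ // KeyChainTo a f} →
    {T : KeyCell a → Fin N // IsSKT a T} :=
  fun fc => ⟨Tab fc.2, ⟨tab_inj fc.2, tab_surj fc.2⟩, tab_row fc.2, tab_col fc.2⟩

lemma Phi_bij : Function.Bijective (Phi (n := n) (N := N) (a := a)) := by
  constructor
  · rintro ⟨f, hf⟩ ⟨f', hf'⟩ h
    have hTab : Tab hf = Tab hf' := congrArg Subtype.val h
    apply Subtype.ext
    funext x
    have hg : gOf f x.1 = gOf f' x.1 := by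
      funext r
      rw [← cnt_tab hf (by omega : x.1 ≤ N) r, ← cnt_tab hf' (by omega : x.1 ≤ N) r, hTab]
    rw [gOf_eq f (by omega : x.1 ≤ N), gOf_eq f' (by omega : x.1 ≤ N)] at hg
    have hx : (⟨x.1, by omega⟩ : Fin (N + 1)) = x := Fin.ext rfl
    rwa [hx] at hg
  · rintro ⟨T, hT⟩
    refine ⟨⟨fInv T, fInv_chain hT⟩, ?_⟩
    apply Subtype.ext
    funext p
    exact tab_fInv hT p

end KeyProof

/-- Saturated chains in the key poset from ∅ to `a` are in bijection with
standard key tableaux of shape `a`, by placing entry `N - i + 1` (1-indexed,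
i.e. the value `N - i` of `Fin N`) in the unique cell of `a⁽ⁱ⁾ \ a⁽ⁱ⁻¹⁾`. -/
theorem chains_biject_with_SKT {n N : ℕ} (a : Fin n → ℕ) (hN : N = ∑ i, a i) :
    ∃ e : {f : Fin (N + 1) → Fin n → ℕ // KeyChainTo a f} ≃
          {T : KeyCell a → Fin N // IsSKT a T},
      ∀ (f : {f : Fin (N + 1) → Fin n → ℕ // KeyChainTo a f})
        (k : ℕ) (hk1 : 1 ≤ k) (hk2 : k ≤ N) (p : KeyCell a),
        f.1 ⟨k - 1, by omega⟩ p.1.1 ≤ p.1.2 →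
        p.1.2 < f.1 ⟨k, by omega⟩ p.1.1 →
        ((e f).1 p : ℕ) = N - k := by
  refine ⟨Equiv.ofBijective _ KeyProof.Phi_bij, ?_⟩
  rintro ⟨f, hf⟩ k hk1 hk2 p hlo hhi
  show (KeyProof.Tab hf p : ℕ) = N - k
  rw [KeyProof.tab_val]
  have hko : KeyProof.kOf hf p = k := by
    rw [KeyProof.kOf, Nat.find_eq_iff]
    constructor
    · show (p.1.2 : ℕ) < KeyProof.gOf f k p.1.1
      rw [KeyProof.gOf_eq f hk2]
      exact hhi
    · intro m hm
      simp only [not_lt]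
      show KeyProof.gOf f m p.1.1 ≤ p.1.2
      calc KeyProof.gOf f m p.1.1 ≤ KeyProof.gOf f (k - 1) p.1.1 :=
            KeyProof.gmono hf (by omega) _
        _ ≤ p.1.2 := by rw [KeyProof.gOf_eq f (by omega)]; exact hlo
  rw [hko]
end
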